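/- arXiv:2212.06500 — 5 statements merged into one kernel-verified Lean document; each statement's English description precedes it below -/
import Mathlib

section
/- Let X be a finite-dimensional Banach space and 𝒯 = (T_1,...,T_k) ∈ L(X)^k. Then the p-th joint numerical radius is attained at a pair of extreme points: w_p(𝒯) = max{(Σ_{i=1}^k |x*(T_i x)|^p)^{1/p} : (x,x*) ∈ G_X}, where G_X = {(x,x*) ∈ Π_X : x ∈ E_X, x* ∈ E_{X*}}. -/
open scoped ENNReal

noncomputable section

/-- The set Π_X of pairs (x, x*) with ‖x‖ = 1, ‖x*‖ = 1 and x*(x) = 1. -/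
def dualPairs (𝕜 X : Type*) [RCLike 𝕜] [NormedAddCommGroup X] [NormedSpace 𝕜 X] :
    Set (X × (X →L[𝕜] 𝕜)) :=
  {q | ‖q.1‖ = 1 ∧ ‖q.2‖ = 1 ∧ q.2 q.1 = 1}

/-- Numerical range of an operator. -/
def numRange {𝕜 X : Type*} [RCLike 𝕜] [NormedAddCommGroup X] [NormedSpace 𝕜 X]
    (T : X →L[𝕜] X) : Set 𝕜 :=
  {c | ∃ q ∈ dualPairs 𝕜 X, c = q.2 (T q.1)}

/-- Numerical radius of an operator. -/
def numRadius {𝕜 X : Type*} [RCLike 𝕜] [NormedAddCommGroup X] [NormedSpace 𝕜 X]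
    (T : X →L[𝕜] X) : ℝ :=
  sSup {r | ∃ q ∈ dualPairs 𝕜 X, r = ‖q.2 (T q.1)‖}

/-- Joint numerical range of a k-tuple of operators. -/
def jointNumRange {𝕜 X : Type*} [RCLike 𝕜] [NormedAddCommGroup X] [NormedSpace 𝕜 X]
    {k : ℕ} (T : Fin k → X →L[𝕜] X) : Set (Fin k → 𝕜) :=
  {v | ∃ q ∈ dualPairs 𝕜 X, v = fun i => q.2 (T i q.1)}

/-- The p-th joint numerical radius of a k-tuple of operators. -/
def jointNumRadius {𝕜 X : Type*} [RCLike 𝕜] [NormedAddCommGroup X] [NormedSpace 𝕜 X]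
    (p : ℝ) {k : ℕ} (T : Fin k → X →L[𝕜] X) : ℝ :=
  sSup {r | ∃ q ∈ dualPairs 𝕜 X, r = (∑ i, ‖q.2 (T i q.1)‖ ^ p) ^ (1 / p)}

/-- The p-th joint operator norm of a k-tuple of operators. -/
def jointOpNorm {𝕜 X Y : Type*} [RCLike 𝕜] [NormedAddCommGroup X] [NormedSpace 𝕜 X]
    [NormedAddCommGroup Y] [NormedSpace 𝕜 Y]
    (p : ℝ) {k : ℕ} (T : Fin k → X →L[𝕜] Y) : ℝ :=
  sSup {r | ∃ x : X, ‖x‖ = 1 ∧ r = (∑ i, ‖T i x‖ ^ p) ^ (1 / p)}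

/-- The numerical index of a space. -/
def numIndex (𝕜 X : Type*) [RCLike 𝕜] [NormedAddCommGroup X] [NormedSpace 𝕜 X] : ℝ :=
  sInf {r | ∃ T : X →L[𝕜] X, ‖T‖ = 1 ∧ r = numRadius T}

/-- The (p,k)-th joint numerical index of a space. -/
def jointNumIndex (p : ℝ) (k : ℕ) (𝕜 X : Type*) [RCLike 𝕜] [NormedAddCommGroup X]
    [NormedSpace 𝕜 X] : ℝ :=
  sInf {r | ∃ T : Fin k → X →L[𝕜] X, jointOpNorm p T = 1 ∧ r = jointNumRadius p T}

/-!
The objective is continuous on the compact set `Π_X`, so it has a maximiser `(x₀, x₀*)`. The sum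
`∑ |x*(Tᵢ x)|ᵖ` is convex in `x*` for fixed `x` and in `x` for fixed `x*`. The face
`{x* ∈ B_{X*} | x*(x₀) = 1}` is a compact extreme subset of `B_{X*}`, so by Krein–Milman the sum
restricted to it is maximised at an extreme point `x₁*` of `B_{X*}`; maximising next over the face
`{x ∈ B_X | x₁*(x) = 1}` yields an extreme point `x₁` of `B_X`. The pair `(x₁, x₁*)` lies in `G_X`
and its value is at least that of `(x₀, x₀*)`.
-/

open Set Metric

section Convexity

variable {E β : Type*} [AddCommGroup E] [Module ℝ E] {s : Set E}

lemma convexOn_finsetSum [AddCommMonoid β] [PartialOrder β] [IsOrderedAddMonoid β]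
    [Module ℝ β] [PosSMulMono ℝ β] {ι : Type*} (t : Finset ι) {f : ι → E → β}
    (hs : Convex ℝ s) (hf : ∀ i ∈ t, ConvexOn ℝ s (f i)) :
    ConvexOn ℝ s fun x => ∑ i ∈ t, f i x := by
  classical
  induction t using Finset.induction_on with
  | empty => simpa using convexOn_const (0 : β) hs
  | insert i t hi ih =>
    simp only [Finset.sum_insert hi]
    exact (hf i (t.mem_insert_self i)).add (ih fun j hj => hf j (Finset.mem_insert_of_mem hj))

lemma ConvexOn.rpow {f : E → ℝ} (hf : ConvexOn ℝ s f) (hf₀ : ∀ x ∈ s, 0 ≤ f x) {p : ℝ}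
    (hp : 1 ≤ p) : ConvexOn ℝ s fun x => f x ^ p := by
  refine ⟨hf.1, fun x hx y hy a b ha hb hab => ?_⟩
  calc f (a • x + b • y) ^ p ≤ (a • f x + b • f y) ^ p :=
        Real.rpow_le_rpow (hf₀ _ (hf.1 hx hy ha hb hab)) (hf.2 hx hy ha hb hab)
          (zero_le_one.trans hp)
    _ ≤ a • f x ^ p + b • f y ^ p :=
        (convexOn_rpow hp).2 (hf₀ x hx) (hf₀ y hy) ha hb hab

lemma convexOn_sum_norm_rpow {F : Type*} [SeminormedAddCommGroup F] [NormedSpace ℝ F]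
    {ι : Type*} (t : Finset ι) (L : ι → E →ₗ[ℝ] F) {p : ℝ} (hp : 1 ≤ p) :
    ConvexOn ℝ univ fun x => ∑ i ∈ t, ‖L i x‖ ^ p :=
  convexOn_finsetSum t convex_univ fun i _ =>
    ((convexOn_norm convex_univ).comp_linearMap (L i)).rpow (fun _ _ => norm_nonneg _) hp

lemma ConvexOn.isExtreme_sep_eq {f : E → ℝ} {c : ℝ} (hf : ConvexOn ℝ s f)
    (hc : ∀ x ∈ s, f x ≤ c) : IsExtreme ℝ s {x ∈ s | f x = c} := by
  refine ⟨sep_subset _ _, fun x₁ hx₁ x₂ hx₂ x ⟨_, hfx⟩ hx => ⟨hx₁, ?_⟩⟩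
  exact le_antisymm (hc x₁ hx₁) (hfx ▸ hf.le_left_of_right_le hx₁ hx₂ hx (hfx ▸ hc x₂ hx₂))

variable [TopologicalSpace E] [T2Space E] [IsTopologicalAddGroup E] [ContinuousSMul ℝ E]
  [LocallyConvexSpace ℝ E]

lemma ConvexOn.exists_mem_extremePoints_isMaxOn {f : E → ℝ} (hf : ConvexOn ℝ s f)
    (hfc : ContinuousOn f s) (hs : IsCompact s) (hne : s.Nonempty) :
    ∃ e ∈ s.extremePoints ℝ, IsMaxOn f s e := by
  obtain ⟨x₀, hx₀, hmax⟩ := hs.exists_isMaxOn hne hfc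
  have hA : IsExtreme ℝ s {x ∈ s | f x = f x₀} := hf.isExtreme_sep_eq fun x hx => hmax hx
  have hAcomp : IsCompact {x ∈ s | f x = f x₀} :=
    hs.of_isClosed_subset (hfc.preimage_isClosed_of_isClosed hs.isClosed isClosed_singleton)
      (sep_subset _ _)
  obtain ⟨e, he⟩ := hAcomp.extremePoints_nonempty ⟨x₀, hx₀, rfl⟩
  exact ⟨e, hA.extremePoints_subset_extremePoints he, fun x hx => he.1.2 ▸ hmax hx⟩

end Convexity

section UnitBall

variable {𝕜 E : Type*} [RCLike 𝕜] [NormedAddCommGroup E] [NormedSpace 𝕜 E] [NormedSpace ℝ E]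
  [IsScalarTower ℝ 𝕜 E]

lemma isExtreme_closedBall_sep_apply_eq_one (Λ : E →L[𝕜] 𝕜) (hΛ : ‖Λ‖ ≤ 1) :
    IsExtreme ℝ (closedBall (0 : E) 1) {e ∈ closedBall (0 : E) 1 | Λ e = 1} := by
  have hnorm : ∀ e ∈ closedBall (0 : E) 1, ‖Λ e‖ ≤ 1 := fun e he =>
    Λ.le_of_opNorm_le_of_le hΛ (mem_closedBall_zero_iff.1 he) |>.trans_eq (one_mul 1)
  have hre : ∀ e ∈ closedBall (0 : E) 1, RCLike.re (Λ e) ≤ 1 := fun e he =>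
    (RCLike.re_le_norm _).trans (hnorm e he)
  have hface : {e ∈ closedBall (0 : E) 1 | Λ e = 1} =
      {e ∈ closedBall (0 : E) 1 | RCLike.re (Λ e) = 1} := by
    refine sep_ext_iff.2 fun e he => ⟨fun h => by simp [h], fun h => ?_⟩
    -- a scalar of norm at most `1` with real part `1` is `1`
    simpa [h] using (RCLike.re_eq_self_of_le ((hnorm e he).trans h.ge)).symm
  rw [hface]
  exact (RCLike.reCLM.comp (Λ.restrictScalars ℝ)).toLinearMap.convexOn
    (convex_closedBall 0 1) |>.isExtreme_sep_eq hre

lemma exists_mem_extremePoints_closedBall_apply_eq_one_le [ProperSpace E] (Λ : E →L[𝕜] 𝕜)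
    (hΛ : ‖Λ‖ ≤ 1) {e₀ : E} (he₀ : e₀ ∈ closedBall (0 : E) 1) (hΛe₀ : Λ e₀ = 1) {g : E → ℝ}
    (hg : ConvexOn ℝ univ g) (hgc : Continuous g) :
    ∃ e ∈ (closedBall (0 : E) 1).extremePoints ℝ, Λ e = 1 ∧ g e₀ ≤ g e := by
  set F := {e ∈ closedBall (0 : E) 1 | Λ e = 1}
  have hFcomp : IsCompact F := (isCompact_closedBall 0 1).of_isClosed_subset
    (isClosed_closedBall.inter (isClosed_eq Λ.continuous continuous_const)) (sep_subset _ _)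
  have hFconv : Convex ℝ F := (convex_closedBall 0 1).inter <|
    (convex_singleton (1 : 𝕜)).linear_preimage (Λ.restrictScalars ℝ).toLinearMap
  obtain ⟨e, he, hmax⟩ := (hg.subset (subset_univ F) hFconv).exists_mem_extremePoints_isMaxOn
    hgc.continuousOn hFcomp ⟨e₀, he₀, hΛe₀⟩
  exact ⟨e, (isExtreme_closedBall_sep_apply_eq_one Λ hΛ).extremePoints_subset_extremePoints he,
    he.1.2, hmax ⟨he₀, hΛe₀⟩⟩

end UnitBall

section DualPairs

variable {𝕜 X : Type*} [RCLike 𝕜] [NormedAddCommGroup X] [NormedSpace 𝕜 X]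

lemma mem_dualPairs_of_norm_le_one {x : X} {φ : X →L[𝕜] 𝕜} (hx : ‖x‖ ≤ 1) (hφ : ‖φ‖ ≤ 1)
    (hφx : φ x = 1) : (x, φ) ∈ dualPairs 𝕜 X := by
  have h : 1 ≤ ‖φ‖ * ‖x‖ := by simpa [hφx] using φ.le_opNorm x
  exact ⟨le_antisymm hx (by nlinarith [norm_nonneg x]),
    le_antisymm hφ (by nlinarith [norm_nonneg φ]), hφx⟩

lemma dualPairs_nonempty [Nontrivial X] : (dualPairs 𝕜 X).Nonempty := by
  obtain ⟨x, hx⟩ := exists_ne (0 : X)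
  obtain ⟨φ, hφ, hφx⟩ := exists_dual_vector' 𝕜 ((‖x‖⁻¹ : 𝕜) • x)
  exact ⟨(_, φ), norm_smul_inv_norm hx, hφ, hφx.trans (by simp [norm_smul_inv_norm hx])⟩

lemma isCompact_dualPairs [FiniteDimensional 𝕜 X] : IsCompact (dualPairs 𝕜 X) := by
  have := FiniteDimensional.proper 𝕜 X
  have := FiniteDimensional.proper 𝕜 (X →L[𝕜] 𝕜)
  refine isCompact_of_isClosed_isBounded ?_ <| (isBounded_closedBall (x := 0) (r := 1)).subset
    fun q hq => mem_closedBall_zero_iff.2 (norm_prod_le_iff.2 ⟨hq.1.le, hq.2.1.le⟩)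
  exact (isClosed_eq (by fun_prop) continuous_const).inter <|
    (isClosed_eq (by fun_prop) continuous_const).inter (isClosed_eq (by fun_prop) continuous_const)

end DualPairs

lemma exists_mem_dualPairs_extremePoints_le {𝕜 X : Type*} [RCLike 𝕜] [NormedAddCommGroup X]
    [NormedSpace 𝕜 X] [NormedSpace ℝ X] [IsScalarTower ℝ 𝕜 X] [FiniteDimensional 𝕜 X]
    {Φ : X × (X →L[𝕜] 𝕜) → ℝ} (hΦ : Continuous Φ)
    (hΦ₁ : ∀ φ, ConvexOn ℝ univ fun x => Φ (x, φ)) (hΦ₂ : ∀ x, ConvexOn ℝ univ fun φ => Φ (x, φ))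
    {q : X × (X →L[𝕜] 𝕜)} (hq : q ∈ dualPairs 𝕜 X) :
    ∃ q' ∈ dualPairs 𝕜 X, q'.1 ∈ (closedBall (0 : X) 1).extremePoints ℝ ∧
      q'.2 ∈ (closedBall (0 : X →L[𝕜] 𝕜) 1).extremePoints ℝ ∧ Φ q ≤ Φ q' := by
  have := FiniteDimensional.proper 𝕜 X
  have := FiniteDimensional.proper 𝕜 (X →L[𝕜] 𝕜)
  obtain ⟨⟨x, φ⟩, hx, hφ, hφx⟩ := q, hq
  have happly : ‖ContinuousLinearMap.apply 𝕜 𝕜 x‖ ≤ 1 :=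
    (ContinuousLinearMap.apply 𝕜 𝕜 x).opNorm_le_bound zero_le_one fun ψ => by
      simpa [hx] using ψ.le_opNorm x
  obtain ⟨φ₁, hφ₁, hφ₁x, hφφ₁⟩ := exists_mem_extremePoints_closedBall_apply_eq_one_le
    (ContinuousLinearMap.apply 𝕜 𝕜 x) happly (mem_closedBall_zero_iff.2 hφ.le) hφx (hΦ₂ x)
    (by fun_prop)
  obtain ⟨x₁, hx₁, hφ₁x₁, hxx₁⟩ := exists_mem_extremePoints_closedBall_apply_eq_one_le
    φ₁ (mem_closedBall_zero_iff.1 hφ₁.1) (mem_closedBall_zero_iff.2 hx.le) hφ₁x (hΦ₁ φ₁)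
    (by fun_prop)
  exact ⟨(x₁, φ₁), mem_dualPairs_of_norm_le_one (mem_closedBall_zero_iff.1 hx₁.1)
    (mem_closedBall_zero_iff.1 hφ₁.1) hφ₁x₁, hx₁, hφ₁, hφφ₁.trans hxx₁⟩

theorem stmt5 {𝕜 X : Type*} [RCLike 𝕜] [NormedAddCommGroup X] [NormedSpace 𝕜 X]
    [NormedSpace ℝ X] [IsScalarTower ℝ 𝕜 X]
    [FiniteDimensional 𝕜 X] [Nontrivial X] {p : ℝ} (hp : 1 ≤ p)
    {k : ℕ} (T : Fin k → X →L[𝕜] X) :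
    (∃ q ∈ dualPairs 𝕜 X,
        q.1 ∈ Set.extremePoints ℝ (Metric.closedBall (0 : X) 1) ∧
        q.2 ∈ Set.extremePoints ℝ (Metric.closedBall (0 : X →L[𝕜] 𝕜) 1) ∧
        jointNumRadius p T = (∑ i, ‖q.2 (T i q.1)‖ ^ p) ^ (1 / p)) ∧
    (∀ q ∈ dualPairs 𝕜 X,
        q.1 ∈ Set.extremePoints ℝ (Metric.closedBall (0 : X) 1) →
        q.2 ∈ Set.extremePoints ℝ (Metric.closedBall (0 : X →L[𝕜] 𝕜) 1) →
        (∑ i, ‖q.2 (T i q.1)‖ ^ p) ^ (1 / p) ≤ jointNumRadius p T) := by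
  set Φ : X × (X →L[𝕜] 𝕜) → ℝ := fun q => ∑ i, ‖q.2 (T i q.1)‖ ^ p
  have hp₀ : 0 ≤ p := zero_le_one.trans hp
  have hΦ : Continuous Φ := continuous_finsetSum _ fun i _ => by fun_prop (disch := exact hp₀)
  obtain ⟨q₀, hq₀, hmax⟩ := isCompact_dualPairs.exists_isMaxOn dualPairs_nonempty
    (hΦ.rpow_const fun _ => Or.inr (one_div_nonneg.2 hp₀)).continuousOn
  have hJ : jointNumRadius p T = Φ q₀ ^ (1 / p) :=
    IsGreatest.csSup_eq ⟨⟨q₀, hq₀, rfl⟩, by rintro _ ⟨q, hq, rfl⟩; exact hmax hq⟩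
  obtain ⟨q₁, hq₁, hx₁, hφ₁, hle⟩ := exists_mem_dualPairs_extremePoints_le hΦ
    (fun φ => convexOn_sum_norm_rpow _ (fun i => ((φ.comp (T i)).restrictScalars ℝ).toLinearMap) hp)
    (fun x => convexOn_sum_norm_rpow _
      (fun i => ((ContinuousLinearMap.apply 𝕜 𝕜 (T i x)).restrictScalars ℝ).toLinearMap) hp)
    hq₀
  refine ⟨⟨q₁, hq₁, hx₁, hφ₁, le_antisymm ?_ (hJ ▸ hmax hq₁)⟩, fun q hq _ _ => hJ ▸ hmax hq⟩
  exact hJ ▸ Real.rpow_le_rpow (Finset.sum_nonneg fun _ _ => by positivity) hle (by positivity)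
end
end

section
/- For any k-tuple 𝒯 = (T_1,...,T_k) of bounded operators on a Banach space X, w_p(𝒯) ≤ w_p(𝒯*), where 𝒯* = (T_1*,...,T_k*) is the tuple of adjoint operators on X*. Moreover, if X is reflexive, then w_p(𝒯) = w_p(𝒯*). -/
open scoped ENNReal

noncomputable section

theorem stmt7 {𝕜 X : Type*} [RCLike 𝕜] [NormedAddCommGroup X] [NormedSpace 𝕜 X]
    [CompleteSpace X] {p : ℝ} (hp : 1 ≤ p) {k : ℕ} (T : Fin k → X →L[𝕜] X)
    (Tstar : Fin k → (X →L[𝕜] 𝕜) →L[𝕜] (X →L[𝕜] 𝕜))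
    (hTstar : ∀ (i : Fin k) (f : X →L[𝕜] 𝕜) (x : X), Tstar i f x = f (T i x)) :
    jointNumRadius p T ≤ jointNumRadius p Tstar ∧
    (Function.Surjective (NormedSpace.inclusionInDoubleDualLi 𝕜 (E := X)) →
      jointNumRadius p T = jointNumRadius p Tstar) := by
  have hp0 : (0:ℝ) < p := lt_of_lt_of_le one_pos hp
  set S : Set ℝ := {r | ∃ q ∈ dualPairs 𝕜 X, r = (∑ i, ‖q.2 (T i q.1)‖ ^ p) ^ (1 / p)} with hS
  set S' : Set ℝ :=
    {r | ∃ q ∈ dualPairs 𝕜 (X →L[𝕜] 𝕜), r = (∑ i, ‖q.2 (Tstar i q.1)‖ ^ p) ^ (1 / p)} with hS'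
  -- nonnegativity of elements
  have hnn : ∀ r ∈ S, (0:ℝ) ≤ r := by
    rintro r ⟨q, hq, rfl⟩
    exact Real.rpow_nonneg (Finset.sum_nonneg fun i _ =>
      Real.rpow_nonneg (norm_nonneg _) p) _
  have hnn' : ∀ r ∈ S', (0:ℝ) ≤ r := by
    rintro r ⟨q, hq, rfl⟩
    exact Real.rpow_nonneg (Finset.sum_nonneg fun i _ =>
      Real.rpow_nonneg (norm_nonneg _) p) _
  -- bounds
  have hbd : ∀ r ∈ S, r ≤ (∑ i, ‖T i‖ ^ p) ^ (1 / p) := by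
    rintro r ⟨q, ⟨h1, h2, h3⟩, rfl⟩
    apply Real.rpow_le_rpow (Finset.sum_nonneg fun i _ =>
      Real.rpow_nonneg (norm_nonneg _) p) _ (by positivity)
    apply Finset.sum_le_sum
    intro i _
    apply Real.rpow_le_rpow (norm_nonneg _) _ (le_of_lt hp0)
    calc ‖q.2 (T i q.1)‖ ≤ ‖q.2‖ * ‖T i q.1‖ := q.2.le_opNorm _
      _ ≤ 1 * (‖T i‖ * ‖q.1‖) := by
          rw [h2]; exact mul_le_mul_of_nonneg_left ((T i).le_opNorm _) one_pos.le
      _ = ‖T i‖ := by rw [h1]; ring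
  have hTstar_norm : ∀ i, ‖Tstar i‖ ≤ ‖T i‖ := by
    intro i
    apply ContinuousLinearMap.opNorm_le_bound _ (norm_nonneg _)
    intro f
    apply ContinuousLinearMap.opNorm_le_bound _ (by positivity)
    intro x
    rw [hTstar]
    calc ‖f (T i x)‖ ≤ ‖f‖ * ‖T i x‖ := f.le_opNorm _
      _ ≤ ‖f‖ * (‖T i‖ * ‖x‖) := by
          exact mul_le_mul_of_nonneg_left ((T i).le_opNorm _) (norm_nonneg _)
      _ = ‖T i‖ * ‖f‖ * ‖x‖ := by ring
  have hbd' : ∀ r ∈ S', r ≤ (∑ i, ‖T i‖ ^ p) ^ (1 / p) := by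
    rintro r ⟨q, ⟨h1, h2, h3⟩, rfl⟩
    apply Real.rpow_le_rpow (Finset.sum_nonneg fun i _ =>
      Real.rpow_nonneg (norm_nonneg _) p) _ (by positivity)
    apply Finset.sum_le_sum
    intro i _
    apply Real.rpow_le_rpow (norm_nonneg _) _ (le_of_lt hp0)
    calc ‖q.2 (Tstar i q.1)‖ ≤ ‖q.2‖ * ‖Tstar i q.1‖ := q.2.le_opNorm _
      _ ≤ 1 * (‖Tstar i‖ * ‖q.1‖) := by
          rw [h2]; exact mul_le_mul_of_nonneg_left ((Tstar i).le_opNorm _) one_pos.le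
      _ = ‖Tstar i‖ := by rw [h1]; ring
      _ ≤ ‖T i‖ := hTstar_norm i
  have hBdd : BddAbove S := ⟨_, hbd⟩
  have hBdd' : BddAbove S' := ⟨_, hbd'⟩
  -- S ⊆ S'
  have hsub : S ⊆ S' := by
    rintro r ⟨⟨x, f⟩, ⟨h1, h2, h3⟩, rfl⟩
    refine ⟨(f, NormedSpace.inclusionInDoubleDualLi 𝕜 (E := X) x), ⟨h2, ?_, ?_⟩, ?_⟩
    · rw [LinearIsometry.norm_map]; exact h1
    · exact h3
    · congr 1
      apply Finset.sum_congr rfl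
      intro i _
      congr 2
      exact (hTstar i f x).symm
  have hle : jointNumRadius p T ≤ jointNumRadius p Tstar := by
    apply Real.sSup_le
    · intro r hr
      exact le_csSup hBdd' (hsub hr)
    · exact Real.sSup_nonneg hnn'
  refine ⟨hle, fun hsurj => le_antisymm hle ?_⟩
  -- reverse inclusion under surjectivity
  have hsub' : S' ⊆ S := by
    rintro r ⟨⟨f, F⟩, ⟨h1, h2, h3⟩, rfl⟩
    obtain ⟨x, hx⟩ := hsurj F
    have hnx : ‖x‖ = 1 := by
      rw [← (NormedSpace.inclusionInDoubleDualLi 𝕜 (E := X)).norm_map x, hx]; exact h2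
    have happ : ∀ g : X →L[𝕜] 𝕜, F g = g x := by
      intro g; rw [← hx]; rfl
    refine ⟨(x, f), ⟨hnx, h1, ?_⟩, ?_⟩
    · show f x = 1
      rw [← happ f]; exact h3
    · congr 1
      apply Finset.sum_congr rfl
      intro i _
      congr 2
      rw [happ (Tstar i f), hTstar]
  apply Real.sSup_le
  · intro r hr
    exact le_csSup hBdd (hsub' hr)
  · exact Real.sSup_nonneg hnn
end
end

section
/- For m > 2 and 1 < k ≤ m, define T_i ∈ L(ℓ∞^m) by T_i e_i = e_i and T_i e_j = 0 for j ≠ i, and let 𝒯 = (T_1,...,T_k). Then ‖𝒯‖_p = k^{1/p} computed on ℓ∞^m, while the adjoint tuple 𝒯* acting on ℓ₁^m satisfies ‖𝒯*‖_p = 1. Hence in general ‖𝒯‖_p ≠ ‖𝒯*‖_p for k > 1. -/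
open scoped ENNReal

noncomputable section

/-! The coordinate projections satisfy `‖T i x‖ = ‖x (f i)‖` for an injective `f`. In `ℓ∞` every
coordinate of a unit vector has modulus at most `1`, with equality for all of them at the all-ones
vector, so the joint norm is `k ^ (1 / p)`. In `ℓ₁` the coordinates of a unit vector have moduli
summing to `1`, so for `p ≥ 1` we get `∑ ‖x (f i)‖ ^ p ≤ ∑ ‖x (f i)‖ ≤ 1`, with equality at a basis
vector. -/

section JointOpNorm

variable {𝕜 X Y : Type*} [RCLike 𝕜] [NormedAddCommGroup X] [NormedSpace 𝕜 X]
  [NormedAddCommGroup Y] [NormedSpace 𝕜 Y]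

theorem jointOpNorm_eq_of_forall_le_of_exists {p c : ℝ} {k : ℕ} {T : Fin k → X →L[𝕜] Y}
    (hle : ∀ x : X, ‖x‖ = 1 → (∑ i, ‖T i x‖ ^ p) ^ (1 / p) ≤ c)
    (hex : ∃ x : X, ‖x‖ = 1 ∧ (∑ i, ‖T i x‖ ^ p) ^ (1 / p) = c) :
    jointOpNorm p T = c := by
  obtain ⟨x₀, hx₀, rfl⟩ := hex
  refine IsGreatest.csSup_eq ⟨⟨x₀, hx₀, rfl⟩, ?_⟩
  rintro r ⟨x, hx, rfl⟩
  exact hle x hx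

end JointOpNorm

theorem PiLp.norm_eq_of_apply_eq_ite {q : ℝ≥0∞} [Fact (1 ≤ q)] {ι 𝕜 : Type*} [Fintype ι]
    [DecidableEq ι] [NormedField 𝕜] {x y : PiLp q fun _ : ι => 𝕜} {i : ι}
    (h : ∀ j, y j = if j = i then x j else 0) : ‖y‖ = ‖x i‖ := by
  have hy : y = PiLp.single q i (x i) := by
    ext j
    rw [h, PiLp.single_apply]
    split_ifs with hj <;> simp [hj]
  rw [hy, PiLp.norm_single]

section CoordinateTuples

variable {𝕜 Y ι : Type*} [RCLike 𝕜] [NormedAddCommGroup Y] [NormedSpace 𝕜 Y] [Fintype ι]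
  {p : ℝ} {k : ℕ} {f : Fin k → ι}

theorem jointOpNorm_sup_eq_rpow_of_norm_apply_eq [Nonempty ι] (hp : 0 < p)
    {T : Fin k → PiLp ∞ (fun _ : ι => 𝕜) →L[𝕜] Y} (hT : ∀ i x, ‖T i x‖ = ‖x (f i)‖) :
    jointOpNorm p T = (k : ℝ) ^ (1 / p) := by
  refine jointOpNorm_eq_of_forall_le_of_exists (fun x hx => ?_) ⟨WithLp.toLp ∞ fun _ => 1, ?_, ?_⟩
  · have hsum : ∑ i, ‖T i x‖ ^ p ≤ ∑ _i : Fin k, (1 : ℝ) := by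
      refine Finset.sum_le_sum fun i _ => Real.rpow_le_one (norm_nonneg _) ?_ hp.le
      exact hT i x ▸ hx ▸ PiLp.norm_apply_le x (f i)
    rw [Finset.sum_const, Finset.card_univ, Fintype.card_fin, nsmul_one] at hsum
    exact Real.rpow_le_rpow (by positivity) hsum (by positivity)
  · simp
  · simp [hT]

theorem jointOpNorm_l1_eq_one_of_norm_apply_eq [DecidableEq ι] [NeZero k] (hp : 1 ≤ p)
    (hf : Function.Injective f)
    {S : Fin k → PiLp 1 (fun _ : ι => 𝕜) →L[𝕜] Y} (hS : ∀ i x, ‖S i x‖ = ‖x (f i)‖) :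
    jointOpNorm p S = 1 := by
  refine jointOpNorm_eq_of_forall_le_of_exists (fun x hx => ?_) ⟨PiLp.single 1 (f 0) 1, ?_, ?_⟩
  · have hcoord : ∀ j, ‖x j‖ ≤ 1 := fun j => hx ▸ PiLp.norm_apply_le x j
    have hsum : ∑ i, ‖S i x‖ ^ p ≤ 1 := calc
      ∑ i, ‖S i x‖ ^ p ≤ ∑ i, ‖x (f i)‖ := Finset.sum_le_sum fun i _ =>
          (hS i x).symm ▸ Real.rpow_le_self_of_le_one (norm_nonneg _) (hcoord _) hp
      _ = ∑ j ∈ Finset.univ.map ⟨f, hf⟩, ‖x j‖ := by rw [Finset.sum_map]; rfl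
      _ ≤ ∑ j, ‖x j‖ := Finset.sum_le_univ_sum_of_nonneg fun _ => norm_nonneg _
      _ = 1 := by rw [← PiLp.norm_eq_of_L1, hx]
    exact Real.rpow_le_one (by positivity) hsum (by positivity)
  · simp [PiLp.norm_single]
  · have hterm : ∀ i, ‖S i (PiLp.single 1 (f 0) (1 : 𝕜))‖ ^ p = if i = 0 then 1 else 0 := by
      intro i
      rw [hS, PiLp.single_apply]
      by_cases hi : i = 0
      · simp [hi]
      · simp [hi, hf.ne hi, Real.zero_rpow (by linarith : p ≠ 0)]
    simp [hterm]

end CoordinateTuples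

theorem stmt8_general {𝕜 : Type*} [RCLike 𝕜] {m k : ℕ} (hk1 : 1 < k) (hkm : k ≤ m)
    {p : ℝ} (hp : 1 ≤ p)
    (T : Fin k → PiLp ∞ (fun _ : Fin m => 𝕜) →L[𝕜] PiLp ∞ (fun _ : Fin m => 𝕜))
    (hT : ∀ (i : Fin k) (x : PiLp ∞ (fun _ : Fin m => 𝕜)) (j : Fin m),
      T i x j = if (j : ℕ) = (i : ℕ) then x j else 0)
    (S : Fin k → PiLp 1 (fun _ : Fin m => 𝕜) →L[𝕜] PiLp 1 (fun _ : Fin m => 𝕜))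
    (hS : ∀ (i : Fin k) (x : PiLp 1 (fun _ : Fin m => 𝕜)) (j : Fin m),
      S i x j = if (j : ℕ) = (i : ℕ) then x j else 0) :
    jointOpNorm p T = (k : ℝ) ^ (1 / p) ∧ jointOpNorm p S = 1 ∧
    jointOpNorm p T ≠ jointOpNorm p S := by
  have : NeZero k := ⟨by omega⟩
  have : Nonempty (Fin m) := ⟨Fin.castLE hkm 0⟩
  have hcast : ∀ (i : Fin k) (j : Fin m), (j : ℕ) = (i : ℕ) ↔ j = Fin.castLE hkm i := by
    simp [Fin.ext_iff]
  have hT1 : jointOpNorm p T = (k : ℝ) ^ (1 / p) :=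
    jointOpNorm_sup_eq_rpow_of_norm_apply_eq (f := Fin.castLE hkm) (by linarith) fun i x =>
      PiLp.norm_eq_of_apply_eq_ite fun j => by simp only [hT, hcast]
  have hS1 : jointOpNorm p S = 1 :=
    jointOpNorm_l1_eq_one_of_norm_apply_eq hp (Fin.castLE_injective hkm) fun i x =>
      PiLp.norm_eq_of_apply_eq_ite fun j => by simp only [hS, hcast]
  refine ⟨hT1, hS1, ?_⟩
  rw [hT1, hS1]
  exact (Real.one_lt_rpow (by exact_mod_cast hk1) (by positivity)).ne'

theorem stmt8 {𝕜 : Type*} [RCLike 𝕜] {m k : ℕ} (hm : 2 < m) (hk1 : 1 < k) (hkm : k ≤ m)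
    {p : ℝ} (hp : 1 ≤ p)
    (T : Fin k → PiLp ∞ (fun _ : Fin m => 𝕜) →L[𝕜] PiLp ∞ (fun _ : Fin m => 𝕜))
    (hT : ∀ (i : Fin k) (x : PiLp ∞ (fun _ : Fin m => 𝕜)) (j : Fin m),
      T i x j = if (j : ℕ) = (i : ℕ) then x j else 0)
    (S : Fin k → PiLp 1 (fun _ : Fin m => 𝕜) →L[𝕜] PiLp 1 (fun _ : Fin m => 𝕜))
    (hS : ∀ (i : Fin k) (x : PiLp 1 (fun _ : Fin m => 𝕜)) (j : Fin m),
      S i x j = if (j : ℕ) = (i : ℕ) then x j else 0) :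
    jointOpNorm p T = (k : ℝ) ^ (1 / p) ∧ jointOpNorm p S = 1 ∧
    jointOpNorm p T ≠ jointOpNorm p S :=
  stmt8_general hk1 hkm hp T hT S hS
end
end

section
/- For any Banach space X, 1 ≤ p < ∞ and k ∈ ℕ, the (p,k)-th joint numerical index satisfies n(X)/k^{1/p} ≤ n_{(p,k)}(X) ≤ n(X). -/
open scoped ENNReal

noncomputable section

section Aux

variable {𝕜 X : Type*} [RCLike 𝕜] [NormedAddCommGroup X] [NormedSpace 𝕜 X]

lemma pair_norm_le (T : X →L[𝕜] X) {q : X × (X →L[𝕜] 𝕜)} (hq : q ∈ dualPairs 𝕜 X) :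
    ‖q.2 (T q.1)‖ ≤ ‖T‖ := by
  obtain ⟨h1, h2, _⟩ := hq
  calc ‖q.2 (T q.1)‖ ≤ ‖q.2‖ * ‖T q.1‖ := q.2.le_opNorm _
    _ ≤ 1 * (‖T‖ * ‖q.1‖) := by
        rw [h2]; gcongr; exact T.le_opNorm _
    _ = ‖T‖ := by rw [h1]; ring

lemma numRadius_nonneg (T : X →L[𝕜] X) : 0 ≤ numRadius T :=
  Real.sSup_nonneg (by rintro r ⟨q, hq, rfl⟩; exact norm_nonneg _)

lemma jointNumRadius_nonneg (p : ℝ) {k : ℕ} (T : Fin k → X →L[𝕜] X) :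
    0 ≤ jointNumRadius p T :=
  Real.sSup_nonneg (by rintro r ⟨q, hq, rfl⟩; positivity)

lemma jointNumRadius_bddAbove (p : ℝ) {k : ℕ} (T : Fin k → X →L[𝕜] X) (hp : 0 < p) :
    BddAbove {r | ∃ q ∈ dualPairs 𝕜 X, r = (∑ i, ‖q.2 (T i q.1)‖ ^ p) ^ (1 / p)} := by
  refine ⟨(∑ i, ‖T i‖ ^ p) ^ (1 / p), ?_⟩
  rintro r ⟨q, hq, rfl⟩
  refine Real.rpow_le_rpow (by positivity) ?_ (by positivity)
  refine Finset.sum_le_sum fun i _ => ?_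
  exact Real.rpow_le_rpow (norm_nonneg _) (pair_norm_le (T i) hq) hp.le

/-- Each individual pair value is at most the joint numerical radius. -/
lemma pair_le_jointNumRadius {p : ℝ} (hp : 0 < p) {k : ℕ} (T : Fin k → X →L[𝕜] X)
    (i : Fin k) {q : X × (X →L[𝕜] 𝕜)} (hq : q ∈ dualPairs 𝕜 X) :
    ‖q.2 (T i q.1)‖ ≤ jointNumRadius p T := by
  have h1 : ‖q.2 (T i q.1)‖ = (‖q.2 (T i q.1)‖ ^ p) ^ (1 / p) := by
    rw [one_div, Real.rpow_rpow_inv (norm_nonneg _) hp.ne']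
  rw [h1]
  have h2 : (‖q.2 (T i q.1)‖ ^ p) ^ (1 / p) ≤ (∑ j, ‖q.2 (T j q.1)‖ ^ p) ^ (1 / p) := by
    refine Real.rpow_le_rpow (by positivity) ?_ (by positivity)
    exact Finset.single_le_sum (f := fun j => ‖q.2 (T j q.1)‖ ^ p)
      (fun j _ => by positivity) (Finset.mem_univ i)
  exact h2.trans (le_csSup (jointNumRadius_bddAbove p T hp) ⟨q, hq, rfl⟩)

/-- Sup of `‖T x‖` over the unit sphere equals the operator norm. -/
lemma sSup_sphere_norm [Nontrivial X] (T : X →L[𝕜] X) :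
    sSup {r | ∃ x : X, ‖x‖ = 1 ∧ r = ‖T x‖} = ‖T‖ := by
  obtain ⟨y, hy⟩ := exists_ne (0 : X)
  have hy0 : (0:ℝ) < ‖y‖ := norm_pos_iff.2 hy
  set x0 : X := ((‖y‖⁻¹ : ℝ) : 𝕜) • y with hx0def
  have hx0 : ‖x0‖ = 1 := by
    rw [hx0def, norm_smul, RCLike.norm_ofReal, abs_of_nonneg (by positivity),
      inv_mul_cancel₀ hy0.ne']
  have hbdd : BddAbove {r | ∃ x : X, ‖x‖ = 1 ∧ r = ‖T x‖} := by
    refine ⟨‖T‖, ?_⟩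
    rintro r ⟨x, hx, rfl⟩
    exact T.unit_le_opNorm x hx.le
  refine le_antisymm (Real.sSup_le ?_ (norm_nonneg _)) ?_
  · rintro r ⟨x, hx, rfl⟩
    exact T.unit_le_opNorm x hx.le
  · refine le_of_forall_lt fun r hr => ?_
    rcases lt_or_ge r 0 with hr0 | hr0
    · calc r < 0 := hr0
        _ ≤ ‖T x0‖ := norm_nonneg _
        _ ≤ _ := le_csSup hbdd ⟨x0, hx0, rfl⟩
    · obtain ⟨x, hx1, hxr⟩ := T.exists_lt_apply_of_lt_opNorm hr
      have hx0' : x ≠ 0 := by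
        rintro rfl
        simp only [map_zero, norm_zero] at hxr
        exact absurd hxr (not_lt.2 hr0)
      have hxpos : (0:ℝ) < ‖x‖ := norm_pos_iff.2 hx0'
      set u : X := ((‖x‖⁻¹ : ℝ) : 𝕜) • x with hudef
      have hu : ‖u‖ = 1 := by
        rw [hudef, norm_smul, RCLike.norm_ofReal, abs_of_nonneg (by positivity),
          inv_mul_cancel₀ hxpos.ne']
      have hTu : ‖T u‖ = ‖x‖⁻¹ * ‖T x‖ := by
        rw [hudef, map_smul, norm_smul, RCLike.norm_ofReal, abs_of_nonneg (by positivity)]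
      have h1le : (1:ℝ) ≤ ‖x‖⁻¹ := one_le_inv_iff₀.2 ⟨hxpos, hx1.le⟩
      calc r < ‖T x‖ := hxr
        _ = 1 * ‖T x‖ := (one_mul _).symm
        _ ≤ ‖x‖⁻¹ * ‖T x‖ := by gcongr
        _ = ‖T u‖ := hTu.symm
        _ ≤ _ := le_csSup hbdd ⟨u, hu, rfl⟩

/-- The single tuple `(T, 0, …, 0)`. -/
def singleTuple {k : ℕ} (hk : 1 ≤ k) (T : X →L[𝕜] X) : Fin k → X →L[𝕜] X :=
  fun i => if i = (⟨0, hk⟩ : Fin k) then T else 0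

lemma singleTuple_sum {p : ℝ} (hp : 0 < p) {k : ℕ} (hk : 1 ≤ k) (T : X →L[𝕜] X) (x : X)
    (f : X →L[𝕜] 𝕜) : ∑ i, ‖f (singleTuple hk T i x)‖ ^ p = ‖f (T x)‖ ^ p := by
  have hterm : ∀ i ∈ (Finset.univ : Finset (Fin k)), ‖f (singleTuple hk T i x)‖ ^ p
      = if i = (⟨0, hk⟩ : Fin k) then ‖f (T x)‖ ^ p else 0 := by
    intro i _
    unfold singleTuple
    split_ifs with h
    · rfl
    · simp [Real.zero_rpow hp.ne']
  rw [Finset.sum_congr rfl hterm, Finset.sum_ite_eq' Finset.univ _ (fun _ => ‖f (T x)‖ ^ p)]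
  simp

lemma singleTuple_sum' {p : ℝ} (hp : 0 < p) {k : ℕ} (hk : 1 ≤ k) (T : X →L[𝕜] X) (x : X) :
    ∑ i, ‖singleTuple hk T i x‖ ^ p = ‖T x‖ ^ p := by
  have hterm : ∀ i ∈ (Finset.univ : Finset (Fin k)), ‖singleTuple hk T i x‖ ^ p
      = if i = (⟨0, hk⟩ : Fin k) then ‖T x‖ ^ p else 0 := by
    intro i _
    unfold singleTuple
    split_ifs with h
    · rfl
    · simp [Real.zero_rpow hp.ne']
  rw [Finset.sum_congr rfl hterm, Finset.sum_ite_eq' Finset.univ _ (fun _ => ‖T x‖ ^ p)]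
  simp

lemma singleTuple_jointOpNorm [Nontrivial X] {p : ℝ} (hp : 0 < p) {k : ℕ} (hk : 1 ≤ k)
    (T : X →L[𝕜] X) : jointOpNorm p (singleTuple hk T) = ‖T‖ := by
  rw [← sSup_sphere_norm T, jointOpNorm]
  congr 1
  ext r
  constructor
  · rintro ⟨x, hx, rfl⟩
    exact ⟨x, hx, by rw [singleTuple_sum' hp hk T x, one_div,
      Real.rpow_rpow_inv (norm_nonneg _) hp.ne']⟩
  · rintro ⟨x, hx, rfl⟩
    exact ⟨x, hx, by rw [singleTuple_sum' hp hk T x, one_div,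
      Real.rpow_rpow_inv (norm_nonneg _) hp.ne']⟩

lemma singleTuple_jointNumRadius {p : ℝ} (hp : 0 < p) {k : ℕ} (hk : 1 ≤ k)
    (T : X →L[𝕜] X) : jointNumRadius p (singleTuple hk T) = numRadius T := by
  rw [jointNumRadius, numRadius]
  congr 1
  ext r
  constructor
  · rintro ⟨q, hq, rfl⟩
    exact ⟨q, hq, by rw [singleTuple_sum hp hk T q.1 q.2, one_div,
      Real.rpow_rpow_inv (norm_nonneg _) hp.ne']⟩
  · rintro ⟨q, hq, rfl⟩
    exact ⟨q, hq, by rw [singleTuple_sum hp hk T q.1 q.2, one_div,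
      Real.rpow_rpow_inv (norm_nonneg _) hp.ne']⟩

/-- If the joint operator norm is 1, some component has norm at least `k^(-1/p)`. -/
lemma exists_big_component {p : ℝ} (hp : 0 < p) {k : ℕ} (hk : 1 ≤ k)
    (T : Fin k → X →L[𝕜] X) (hT : jointOpNorm p T = 1) :
    ∃ i, ((k : ℝ) ^ (1 / p))⁻¹ ≤ ‖T i‖ := by
  have hne : (Finset.univ : Finset (Fin k)).Nonempty := ⟨⟨0, hk⟩, Finset.mem_univ _⟩
  set M : ℝ := Finset.univ.sup' hne (fun i => ‖T i‖) with hM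
  have hM0 : 0 ≤ M :=
    le_trans (norm_nonneg (T ⟨0, hk⟩))
      (Finset.le_sup' (f := fun i => ‖T i‖) (Finset.mem_univ (⟨0, hk⟩ : Fin k)))
  set c : ℝ := (k : ℝ) ^ (1 / p) with hc
  have hk1 : (1:ℝ) ≤ (k:ℝ) := by exact_mod_cast hk
  have hk0 : (0:ℝ) < (k:ℝ) := lt_of_lt_of_le one_pos hk1
  have hc0 : (0:ℝ) < c := Real.rpow_pos_of_pos hk0 _
  have hMc : c⁻¹ ≤ M := by
    by_contra h
    push_neg at h
    have hbound : ∀ r ∈ {r | ∃ x : X, ‖x‖ = 1 ∧ r = (∑ i, ‖T i x‖ ^ p) ^ (1 / p)},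
        r ≤ c * M := by
      rintro r ⟨x, hx, rfl⟩
      have hsum : ∑ i, ‖T i x‖ ^ p ≤ (k : ℝ) * M ^ p := by
        calc ∑ i, ‖T i x‖ ^ p ≤ ∑ _i : Fin k, M ^ p := by
              refine Finset.sum_le_sum fun i _ => ?_
              refine Real.rpow_le_rpow (norm_nonneg _) ?_ hp.le
              exact le_trans (T i |>.unit_le_opNorm x hx.le)
                (Finset.le_sup' (f := fun j => ‖T j‖) (Finset.mem_univ i))
          _ = (k : ℝ) * M ^ p := by
              rw [Finset.sum_const, Finset.card_univ, Fintype.card_fin, nsmul_eq_mul]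
      calc (∑ i, ‖T i x‖ ^ p) ^ (1 / p) ≤ ((k : ℝ) * M ^ p) ^ (1 / p) :=
            Real.rpow_le_rpow (by positivity) hsum (by positivity)
        _ = c * M := by
            rw [hc, one_div, Real.mul_rpow hk0.le (by positivity),
              Real.rpow_rpow_inv hM0 hp.ne']
    have h1 : (1:ℝ) ≤ c * M := by
      rw [← hT, jointOpNorm]
      exact Real.sSup_le hbound (by positivity)
    have h2 : c * M < c * c⁻¹ := mul_lt_mul_of_pos_left h hc0
    rw [mul_inv_cancel₀ hc0.ne'] at h2
    exact absurd (h1.trans_lt h2) (lt_irrefl _)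
  obtain ⟨i, _, hi⟩ := Finset.exists_mem_eq_sup' hne (fun i => ‖T i‖)
  exact ⟨i, hMc.trans (le_of_eq hi)⟩

end Aux

theorem stmt9 {𝕜 X : Type*} [RCLike 𝕜] [NormedAddCommGroup X] [NormedSpace 𝕜 X]
    [CompleteSpace X] {p : ℝ} (hp : 1 ≤ p) {k : ℕ} (hk : 1 ≤ k) :
    numIndex 𝕜 X / (k : ℝ) ^ (1 / p) ≤ jointNumIndex p k 𝕜 X ∧
    jointNumIndex p k 𝕜 X ≤ numIndex 𝕜 X := by
  have hp0 : 0 < p := lt_of_lt_of_le one_pos hp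
  set c : ℝ := (k : ℝ) ^ (1 / p) with hc
  have hk1 : (1:ℝ) ≤ (k:ℝ) := by exact_mod_cast hk
  have hk0 : (0:ℝ) < (k:ℝ) := lt_of_lt_of_le one_pos hk1
  have hc0 : (0:ℝ) < c := Real.rpow_pos_of_pos hk0 _
  rcases subsingleton_or_nontrivial X with hX | hX
  · -- trivial space: both index sets are empty, both infima are 0
    have hA : {r | ∃ T : X →L[𝕜] X, ‖T‖ = 1 ∧ r = numRadius T} = ∅ := by
      ext r
      simp only [Set.mem_setOf_eq, Set.mem_empty_iff_false, iff_false, not_exists]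
      rintro T ⟨hT, -⟩
      have : T = 0 := Subsingleton.elim _ _
      rw [this, norm_zero] at hT
      exact absurd hT (by norm_num)
    have hB : {r | ∃ T : Fin k → X →L[𝕜] X, jointOpNorm p T = 1 ∧ r = jointNumRadius p T}
        = ∅ := by
      ext r
      simp only [Set.mem_setOf_eq, Set.mem_empty_iff_false, iff_false, not_exists]
      rintro T ⟨hT, -⟩
      have hempty : {r | ∃ x : X, ‖x‖ = 1 ∧ r = (∑ i, ‖T i x‖ ^ p) ^ (1 / p)} = ∅ := by
        ext s
        simp only [Set.mem_setOf_eq, Set.mem_empty_iff_false, iff_false, not_exists]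
        rintro x ⟨hx, -⟩
        have : x = 0 := Subsingleton.elim _ _
        rw [this, norm_zero] at hx
        exact absurd hx (by norm_num)
      rw [jointOpNorm, hempty, Real.sSup_empty] at hT
      exact absurd hT (by norm_num)
    rw [numIndex, jointNumIndex, hA, hB, Real.sInf_empty]
    norm_num
  · -- nontrivial space
    have hbelowA : ∀ r ∈ {r | ∃ T : X →L[𝕜] X, ‖T‖ = 1 ∧ r = numRadius T}, (0:ℝ) ≤ r := by
      rintro r ⟨T, -, rfl⟩; exact numRadius_nonneg T
    have hbelowB : ∀ r ∈ {r | ∃ T : Fin k → X →L[𝕜] X,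
        jointOpNorm p T = 1 ∧ r = jointNumRadius p T}, (0:ℝ) ≤ r := by
      rintro r ⟨T, -, rfl⟩; exact jointNumRadius_nonneg p T
    have hAne : {r | ∃ T : X →L[𝕜] X, ‖T‖ = 1 ∧ r = numRadius T}.Nonempty :=
      ⟨numRadius (ContinuousLinearMap.id 𝕜 X), ContinuousLinearMap.id 𝕜 X,
        ContinuousLinearMap.norm_id, rfl⟩
    have hBne : {r | ∃ T : Fin k → X →L[𝕜] X,
        jointOpNorm p T = 1 ∧ r = jointNumRadius p T}.Nonempty := by
      refine ⟨jointNumRadius p (singleTuple hk (ContinuousLinearMap.id 𝕜 X)),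
        singleTuple hk (ContinuousLinearMap.id 𝕜 X), ?_, rfl⟩
      rw [singleTuple_jointOpNorm hp0 hk, ContinuousLinearMap.norm_id]
    constructor
    · -- lower bound
      rw [jointNumIndex]
      refine le_csInf hBne ?_
      rintro r ⟨T, hT, rfl⟩
      obtain ⟨i, hi⟩ := exists_big_component hp0 hk T hT
      have hTi0 : (0:ℝ) < ‖T i‖ := lt_of_lt_of_le (inv_pos.2 hc0) hi
      set S : X →L[𝕜] X := ((‖T i‖⁻¹ : ℝ) : 𝕜) • T i with hS
      have hSnorm : ‖S‖ = 1 := by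
        rw [hS]
        rw [norm_smul ((‖T i‖⁻¹ : ℝ) : 𝕜) (T i), RCLike.norm_ofReal,
          abs_of_nonneg (by positivity), inv_mul_cancel₀ hTi0.ne']
      have hstep1 : numIndex 𝕜 X ≤ numRadius S := by
        rw [numIndex]
        exact csInf_le ⟨0, hbelowA⟩ ⟨S, hSnorm, rfl⟩
      have hstep2 : numRadius S ≤ c * jointNumRadius p T := by
        rw [numRadius]
        refine Real.sSup_le ?_ (mul_nonneg hc0.le (jointNumRadius_nonneg p T))
        rintro s ⟨q, hq, rfl⟩
        have happ : ‖q.2 (S q.1)‖ = ‖T i‖⁻¹ * ‖q.2 (T i q.1)‖ := by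
          rw [hS]
          simp only [ContinuousLinearMap.smul_apply, map_smul, smul_eq_mul, norm_mul,
            RCLike.norm_ofReal, abs_of_nonneg (inv_nonneg.2 hTi0.le)]
        rw [happ]
        have hinvle : ‖T i‖⁻¹ ≤ c := by
          rw [← inv_inv c]
          exact inv_anti₀ (inv_pos.2 hc0) hi
        calc ‖T i‖⁻¹ * ‖q.2 (T i q.1)‖ ≤ c * ‖q.2 (T i q.1)‖ := by
              gcongr
          _ ≤ c * jointNumRadius p T := by
              gcongr
              exact pair_le_jointNumRadius hp0 T i hq
      rw [div_le_iff₀ hc0, mul_comm]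
      exact hstep1.trans hstep2
    · -- upper bound
      rw [jointNumIndex, numIndex]
      refine le_csInf hAne ?_
      rintro r ⟨T, hT, rfl⟩
      refine csInf_le ⟨0, hbelowB⟩ ⟨singleTuple hk T, ?_, ?_⟩
      · rw [singleTuple_jointOpNorm hp0 hk, hT]
      · rw [singleTuple_jointNumRadius hp0 hk]
end
end

section
/- Let ℓ₂^m be a complex Hilbert space with m ≥ 3, and 1 ≤ k < m. Define T_i e_j = 0 for j < m and T_i e_m = e_i/√k, i = 1,...,k, and 𝒯 = (T_1,...,T_k). Then ‖𝒯‖₂ = 1 and w₂(𝒯) = 1/(2√k). Consequently n_{(2,k)}(ℓ₂^m) = 1/(2√k), and also n_{(2,k)}(ℓ₂) = 1/(2√k). -/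
open scoped ENNReal

noncomputable section

/-! In a Hilbert space a norm-one functional attaining its norm at a unit vector `x` is `⟪x, ·⟫`,
so both joint quantities are suprema over the unit sphere. For `T_i = ⟪e_m, ·⟫ e_i / √k` one has
`∑ ‖T_i x‖² = |x_m|²` and `∑ |⟪x, T_i x⟫|² = |x_m|² ∑_{i ≤ k} |x_i|² / k ≤ 1 / (4k)` by Bessel
and AM-GM, with equality at `(e_1 + e_m) / √2`. Conversely, `‖𝒯‖₂ = 1` forces `∑ ‖T_i‖² ≥ 1`,
so some `‖T_i‖ ≥ 1 / √k`, and the complex polarization bound `‖T‖ ≤ 2 w(T)` gives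
`w₂(𝒯) ≥ w(T_i) ≥ 1 / (2√k)`. Any `k + 1` orthonormal vectors thus realise the joint numerical
index, in `ℓ₂^m` and in `ℓ₂` alike. -/

open scoped InnerProductSpace
open Metric Set

section RCLike

variable {𝕜 H : Type*} [RCLike 𝕜] [NormedAddCommGroup H] [InnerProductSpace 𝕜 H]

lemma dualPairs_snd_apply [CompleteSpace H] {q : H × (H →L[𝕜] 𝕜)} (hq : q ∈ dualPairs 𝕜 H)
    (v : H) : q.2 v = ⟪q.1, v⟫_𝕜 := by
  obtain ⟨h1, h2, h3⟩ := hq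
  set y := (InnerProductSpace.toDual 𝕜 H).symm q.2
  have hy : ∀ w, ⟪y, w⟫_𝕜 = q.2 w := fun w => InnerProductSpace.toDual_symm_apply
  have hny : ‖y‖ = 1 := by rw [LinearIsometryEquiv.norm_map, h2]
  rw [← hy, (inner_eq_one_iff_of_norm_eq_one hny h1).mp (by rw [hy, h3])]

lemma mk_innerSL_mem_dualPairs {x : H} (hx : ‖x‖ = 1) : (x, innerSL 𝕜 x) ∈ dualPairs 𝕜 H :=
  ⟨hx, by rw [innerSL_apply_norm, hx], by simp [inner_self_eq_norm_sq_to_K, hx]⟩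

lemma rpow_sum_rpow_two_eq_sqrt {ι : Type*} (s : Finset ι) (f : ι → ℝ) :
    (∑ i ∈ s, f i ^ (2 : ℝ)) ^ (1 / (2 : ℝ)) = √(∑ i ∈ s, f i ^ 2) := by
  simp only [Real.rpow_two, Real.sqrt_eq_rpow]

lemma jointOpNorm_two_eq_sSup_image {X Y : Type*} [NormedAddCommGroup X] [NormedSpace 𝕜 X]
    [NormedAddCommGroup Y] [NormedSpace 𝕜 Y] {k : ℕ} (T : Fin k → X →L[𝕜] Y) :
    jointOpNorm 2 T = sSup ((fun x => √(∑ i, ‖T i x‖ ^ 2)) '' sphere 0 1) := by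
  simp only [jointOpNorm, rpow_sum_rpow_two_eq_sqrt]
  congr 1
  ext r
  simp [eq_comm]

lemma jointNumRadius_two_eq_sSup_image [CompleteSpace H] {k : ℕ} (T : Fin k → H →L[𝕜] H) :
    jointNumRadius 2 T = sSup ((fun x => √(∑ i, ‖⟪x, T i x⟫_𝕜‖ ^ 2)) '' sphere 0 1) := by
  simp only [jointNumRadius, rpow_sum_rpow_two_eq_sqrt]
  congr 1
  ext r
  constructor
  · rintro ⟨q, hq, rfl⟩
    exact ⟨q.1, by simpa using hq.1, by simp only [dualPairs_snd_apply hq]⟩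
  · rintro ⟨x, hx, rfl⟩
    rw [mem_sphere_zero_iff_norm] at hx
    exact ⟨_, mk_innerSL_mem_dualPairs hx, rfl⟩

variable {k : ℕ}

lemma one_le_sum_norm_sq_of_jointOpNorm_eq_one {X Y : Type*} [NormedAddCommGroup X]
    [NormedSpace 𝕜 X] [NormedAddCommGroup Y] [NormedSpace 𝕜 Y] (T : Fin k → X →L[𝕜] Y)
    (hT : jointOpNorm 2 T = 1) : 1 ≤ ∑ i, ‖T i‖ ^ 2 := by
  rw [jointOpNorm_two_eq_sSup_image] at hT
  have hne : (sphere (0 : X) 1).Nonempty := by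
    by_contra h
    simp [not_nonempty_iff_eq_empty.1 h] at hT
  rw [← Real.one_le_sqrt, ← hT]
  refine csSup_le (hne.image _) (forall_mem_image.2 fun x hx => ?_)
  gcongr with i
  exact (T i).unit_le_opNorm x (mem_sphere_zero_iff_norm.1 hx).le

lemma norm_inner_le_jointNumRadius [CompleteSpace H] (T : Fin k → H →L[𝕜] H) (i : Fin k)
    {x : H} (hx : ‖x‖ = 1) : ‖⟪x, T i x⟫_𝕜‖ ≤ jointNumRadius 2 T := by
  have hbdd : BddAbove ((fun x => √(∑ i, ‖⟪x, T i x⟫_𝕜‖ ^ 2)) '' sphere 0 1) := by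
    refine ⟨√(∑ i, ‖T i‖ ^ 2), forall_mem_image.2 fun y hy => ?_⟩
    gcongr with j
    calc ‖⟪y, T j y⟫_𝕜‖ ≤ ‖y‖ * ‖T j y‖ := norm_inner_le_norm _ _
      _ ≤ ‖T j‖ := by
        rw [mem_sphere_zero_iff_norm.1 hy, one_mul]
        exact (T j).unit_le_opNorm y (mem_sphere_zero_iff_norm.1 hy).le
  rw [jointNumRadius_two_eq_sSup_image]
  calc ‖⟪x, T i x⟫_𝕜‖ = √(‖⟪x, T i x⟫_𝕜‖ ^ 2) := (Real.sqrt_sq (norm_nonneg _)).symm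
    _ ≤ √(∑ j, ‖⟪x, T j x⟫_𝕜‖ ^ 2) :=
      Real.sqrt_le_sqrt (Finset.single_le_sum (fun j _ => sq_nonneg ‖⟪x, T j x⟫_𝕜‖)
        (Finset.mem_univ i))
    _ ≤ _ := le_csSup hbdd (mem_image_of_mem _ (mem_sphere_zero_iff_norm.2 hx))

/-- The paper's tuple `T_i e_m = e_i / √k`, with `g (Fin.last k)` in the role of `e_m`. -/
def rankOneTuple (𝕜 : Type*) [RCLike 𝕜] [InnerProductSpace 𝕜 H] (g : Fin (k + 1) → H) :
    Fin k → H →L[𝕜] H :=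
  fun i => (innerSL 𝕜 (g (Fin.last k))).smulRight ((((√k)⁻¹ : ℝ) : 𝕜) • g i.castSucc)

lemma rankOneTuple_apply (g : Fin (k + 1) → H) (i : Fin k) (x : H) :
    rankOneTuple 𝕜 g i x = ((((√k)⁻¹ : ℝ) : 𝕜) * ⟪g (Fin.last k), x⟫_𝕜) • g i.castSucc := by
  simp [rankOneTuple, smul_smul, mul_comm]

variable {g : Fin (k + 1) → H}

lemma jointOpNorm_rankOneTuple (hk : 0 < k) (hg : Orthonormal 𝕜 g) :
    jointOpNorm 2 (rankOneTuple 𝕜 g) = 1 := by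
  have hk' : (0 : ℝ) < k := by exact_mod_cast hk
  have hvalue : ∀ x, √(∑ i, ‖rankOneTuple 𝕜 g i x‖ ^ 2) = ‖⟪g (Fin.last k), x⟫_𝕜‖ := by
    intro x
    simp only [rankOneTuple_apply, norm_smul, hg.1, mul_one, norm_mul, RCLike.norm_ofReal,
      Finset.sum_const, Finset.card_univ, Fintype.card_fin, nsmul_eq_mul, mul_pow,
      abs_of_nonneg (inv_nonneg.2 (Real.sqrt_nonneg _)), inv_pow, Real.sq_sqrt hk'.le,
      ← mul_assoc, mul_inv_cancel₀ hk'.ne', one_mul, Real.sqrt_sq (norm_nonneg _)]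
  simp_rw [jointOpNorm_two_eq_sSup_image, hvalue]
  refine IsGreatest.csSup_eq ⟨⟨g (Fin.last k), by simp [hg.1], ?_⟩, ?_⟩
  · simp [inner_self_eq_norm_sq_to_K, hg.1]
  · rintro _ ⟨x, hx, rfl⟩
    simpa [hg.1, mem_sphere_zero_iff_norm.1 hx] using norm_inner_le_norm (𝕜 := 𝕜) (g (Fin.last k)) x

lemma norm_inner_mul_sqrt_sum_le_half (hg : Orthonormal 𝕜 g) {x : H} (hx : ‖x‖ = 1) :
    ‖⟪g (Fin.last k), x⟫_𝕜‖ * √(∑ i : Fin k, ‖⟪g i.castSucc, x⟫_𝕜‖ ^ 2) ≤ 1 / 2 := by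
  have hbessel := hg.sum_inner_products_le (s := Finset.univ) x
  rw [Fin.sum_univ_castSucc, hx, one_pow] at hbessel
  set s := ∑ i : Fin k, ‖⟪g i.castSucc, x⟫_𝕜‖ ^ 2
  have hs : 0 ≤ s := by positivity
  nlinarith [Real.sq_sqrt hs, sq_nonneg (‖⟪g (Fin.last k), x⟫_𝕜‖ - √s)]

lemma exists_norm_inner_mul_sqrt_sum_eq_half (hk : 0 < k) (hg : Orthonormal 𝕜 g) :
    ∃ x : H, ‖x‖ = 1 ∧
      ‖⟪g (Fin.last k), x⟫_𝕜‖ * √(∑ i : Fin k, ‖⟪g i.castSucc, x⟫_𝕜‖ ^ 2) = 1 / 2 := by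
  set i₀ : Fin k := ⟨0, hk⟩
  set a : 𝕜 := (((√2)⁻¹ : ℝ) : 𝕜)
  have ha : ‖a‖ = (√2)⁻¹ := by simp [a]
  have hsum : ‖g i₀.castSucc + g (Fin.last k)‖ = √2 := by
    rw [← Real.sqrt_mul_self (norm_nonneg _),
      norm_add_sq_eq_norm_sq_add_norm_sq_of_inner_eq_zero _ _ (hg.2 (Fin.castSucc_ne_last i₀)),
      hg.1, hg.1]
    norm_num
  have hinner : ∀ n, ⟪g n, a • (g i₀.castSucc + g (Fin.last k))⟫_𝕜
      = a * ((if n = i₀.castSucc then 1 else 0) + if n = Fin.last k then 1 else 0) := by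
    intro n
    simp only [inner_smul_right, inner_add_right, orthonormal_iff_ite.mp hg]
  refine ⟨a • (g i₀.castSucc + g (Fin.last k)), ?_, ?_⟩
  · rw [norm_smul, ha, hsum, inv_mul_cancel₀ (by positivity)]
  · simp only [hinner, Fin.castSucc_inj, Fin.castSucc_ne_last, (Fin.castSucc_ne_last i₀).symm,
      if_true, if_false, zero_add, add_zero, mul_one, mul_ite, mul_zero, ha]
    rw [Finset.sum_eq_single_of_mem i₀ (Finset.mem_univ _) fun i _ hi => by simp [hi], if_pos rfl,
      ha, Real.sqrt_sq (by positivity), ← mul_inv, Real.mul_self_sqrt zero_le_two, one_div]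

lemma jointNumRadius_rankOneTuple [CompleteSpace H] (hk : 0 < k) (hg : Orthonormal 𝕜 g) :
    jointNumRadius 2 (rankOneTuple 𝕜 g) = 1 / (2 * √k) := by
  have hvalue : ∀ x, √(∑ i, ‖⟪x, rankOneTuple 𝕜 g i x⟫_𝕜‖ ^ 2) = (√k)⁻¹ *
      (‖⟪g (Fin.last k), x⟫_𝕜‖ * √(∑ i : Fin k, ‖⟪g i.castSucc, x⟫_𝕜‖ ^ 2)) := by
    intro x
    simp only [rankOneTuple_apply, inner_smul_right, norm_mul, RCLike.norm_ofReal,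
      abs_of_nonneg (inv_nonneg.2 (Real.sqrt_nonneg _)), norm_inner_symm x, mul_pow,
      ← Finset.mul_sum]
    rw [← mul_pow, Real.sqrt_mul (by positivity), Real.sqrt_sq (by positivity), mul_assoc]
  have hhalf : (√k)⁻¹ * (1 / 2) = 1 / (2 * √k) := by field_simp
  simp_rw [jointNumRadius_two_eq_sSup_image, hvalue]
  obtain ⟨x₀, hx₀, hvalue₀⟩ := exists_norm_inner_mul_sqrt_sum_eq_half hk hg
  refine IsGreatest.csSup_eq ⟨⟨x₀, by simpa using hx₀, by beta_reduce; rw [hvalue₀, hhalf]⟩, ?_⟩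
  rintro _ ⟨x, hx, rfl⟩
  rw [← hhalf]
  exact mul_le_mul_of_nonneg_left
    (norm_inner_mul_sqrt_sum_le_half hg (mem_sphere_zero_iff_norm.1 hx)) (by positivity)

end RCLike

section Complex

variable {H : Type*} [NormedAddCommGroup H] [InnerProductSpace ℂ H] {S : H →L[ℂ] H} {w : ℝ}

lemma norm_inner_apply_self_le (hw : ∀ x, ‖x‖ = 1 → ‖⟪x, S x⟫_ℂ‖ ≤ w) (z : H) :
    ‖⟪S z, z⟫_ℂ‖ ≤ w * ‖z‖ ^ 2 := by
  rcases eq_or_ne z 0 with rfl | hz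
  · simp
  have hz' : 0 < ‖z‖ := norm_pos_iff.2 hz
  set u := (((‖z‖)⁻¹ : ℝ) : ℂ) • z
  have hu : ‖u‖ = 1 := by simp [u, norm_smul, hz'.ne']
  have hzu : z = ((‖z‖ : ℝ) : ℂ) • u := by simp [u, smul_smul, hz'.ne']
  have hbound := hw u hu
  rw [hzu, map_smul, inner_smul_left, inner_smul_right, norm_mul, norm_mul, norm_inner_symm,
    norm_smul, hu]
  simp only [Complex.conj_ofReal, Complex.norm_real, norm_norm]
  nlinarith [mul_le_mul_of_nonneg_left hbound (sq_nonneg ‖z‖)]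

lemma norm_inner_apply_le_two_mul (hw : ∀ x, ‖x‖ = 1 → ‖⟪x, S x⟫_ℂ‖ ≤ w) {x y : H}
    (hx : ‖x‖ = 1) (hy : ‖y‖ = 1) : ‖⟪S x, y⟫_ℂ‖ ≤ 2 * w := by
  have hpol := inner_map_polarization (S : H →ₗ[ℂ] H) y x
  simp only [ContinuousLinearMap.coe_coe] at hpol
  have hpar := parallelogram_law_with_norm ℂ y x
  have hparI := parallelogram_law_with_norm ℂ y (Complex.I • x)
  rw [norm_smul, Complex.norm_I, one_mul, hx, hy] at hparI
  rw [hx, hy] at hpar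
  rw [hpol, norm_div, RCLike.norm_ofNat, div_le_iff₀ four_pos, sub_eq_add_neg _ (Complex.I * _),
    sub_eq_add_neg (⟪S (y + x), y + x⟫_ℂ)]
  refine norm_add₄_le.trans ?_
  simp only [norm_neg, norm_mul, Complex.norm_I, one_mul]
  have h := norm_inner_apply_self_le hw
  have hw₁ : w * ‖y + x‖ ^ 2 + w * ‖y - x‖ ^ 2 = 4 * w := by rw [← mul_add, hpar]; ring
  have hw₂ : w * ‖y + Complex.I • x‖ ^ 2 + w * ‖y - Complex.I • x‖ ^ 2 = 4 * w := by
    rw [← mul_add, hparI]; ring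
  linarith [h (y + x), h (y - x), h (y + Complex.I • x), h (y - Complex.I • x)]

lemma norm_le_two_mul_of_forall_norm_inner_le (hw0 : 0 ≤ w)
    (hw : ∀ x, ‖x‖ = 1 → ‖⟪x, S x⟫_ℂ‖ ≤ w) : ‖S‖ ≤ 2 * w := by
  refine S.opNorm_le_of_unit_norm (by positivity) fun x hx => ?_
  rcases eq_or_ne (S x) 0 with hSx | hSx
  · rw [hSx, norm_zero]
    positivity
  have hSx' : 0 < ‖S x‖ := norm_pos_iff.2 hSx
  set y := (((‖S x‖)⁻¹ : ℝ) : ℂ) • S x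
  have hy : ‖y‖ = 1 := by simp [y, norm_smul, hSx'.ne']
  calc ‖S x‖ = ‖⟪S x, y⟫_ℂ‖ := by
        simp [y, inner_self_eq_norm_sq_to_K, sq, hSx'.ne']
    _ ≤ 2 * w := norm_inner_apply_le_two_mul hw hx hy

lemma one_div_two_mul_sqrt_le_jointNumRadius [CompleteSpace H] {k : ℕ}
    (S : Fin k → H →L[ℂ] H) (hS : jointOpNorm 2 S = 1) :
    1 / (2 * √k) ≤ jointNumRadius 2 S := by
  have hsum := one_le_sum_norm_sq_of_jointOpNorm_eq_one S hS
  have hk : 0 < k := by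
    rcases Nat.eq_zero_or_pos k with rfl | hk
    · norm_num at hsum
    · exact hk
  have hk' : (0 : ℝ) < k := by exact_mod_cast hk
  obtain ⟨i, -, hi⟩ : ∃ i ∈ Finset.univ, (k : ℝ)⁻¹ ≤ ‖S i‖ ^ 2 := by
    refine Finset.exists_le_of_sum_le ⟨⟨0, hk⟩, Finset.mem_univ _⟩ ?_
    simpa [hk'.ne'] using hsum
  have hi' : (√k)⁻¹ ≤ ‖S i‖ := by
    simpa [Real.sqrt_inv] using Real.sqrt_le_sqrt hi
  have hw0 : 0 ≤ jointNumRadius 2 S := by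
    rw [jointNumRadius_two_eq_sSup_image]
    exact Real.sSup_nonneg (forall_mem_image.2 fun _ _ => Real.sqrt_nonneg _)
  have hnorm := norm_le_two_mul_of_forall_norm_inner_le hw0
    fun x hx => norm_inner_le_jointNumRadius S i hx
  calc 1 / (2 * √k) = (√k)⁻¹ / 2 := by field_simp
    _ ≤ jointNumRadius 2 S := by linarith

lemma jointNumIndex_two_eq_of_orthonormal [CompleteSpace H] {k : ℕ} (hk : 0 < k)
    {g : Fin (k + 1) → H} (hg : Orthonormal ℂ g) :
    jointNumIndex 2 k ℂ H = 1 / (2 * √k) :=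
  IsLeast.csInf_eq ⟨⟨rankOneTuple ℂ g, jointOpNorm_rankOneTuple hk hg,
    (jointNumRadius_rankOneTuple hk hg).symm⟩,
    fun _ ⟨S, hS, hr⟩ => hr ▸ one_div_two_mul_sqrt_le_jointNumRadius S hS⟩

end Complex

lemma exists_orthonormal_eq_rankOneTuple {m k : ℕ} (hkm : k < m)
    (T : Fin k → EuclideanSpace ℂ (Fin m) →L[ℂ] EuclideanSpace ℂ (Fin m))
    (hT : ∀ (i : Fin k) (x : EuclideanSpace ℂ (Fin m)) (j : Fin m),
      T i x j = if (j : ℕ) = (i : ℕ)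
        then x ⟨m - 1, by omega⟩ / ((Real.sqrt k : ℝ) : ℂ) else 0) :
    ∃ g : Fin (k + 1) → EuclideanSpace ℂ (Fin m), Orthonormal ℂ g ∧ T = rankOneTuple ℂ g := by
  set e : Fin (k + 1) → Fin m :=
    Fin.snoc (α := fun _ => Fin m) (Fin.castLE hkm.le) ⟨m - 1, by omega⟩
  have he : Function.Injective e := by
    refine Fin.snoc_injective_of_injective (Fin.castLE_injective _) ?_
    rintro ⟨i, hi⟩
    have := congrArg Fin.val hi
    simp only [Fin.val_castLE] at this
    omega
  refine ⟨fun j => EuclideanSpace.single (e j) 1, EuclideanSpace.orthonormal_single.comp e he, ?_⟩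
  ext i x j
  rw [hT, rankOneTuple_apply]
  simp [e, EuclideanSpace.inner_single_left, Fin.ext_iff, div_eq_mul_inv, mul_comm]

theorem stmt18 {m k : ℕ} (hk1 : 1 ≤ k) (hkm : k < m)
    (T : Fin k → EuclideanSpace ℂ (Fin m) →L[ℂ] EuclideanSpace ℂ (Fin m))
    (hT : ∀ (i : Fin k) (x : EuclideanSpace ℂ (Fin m)) (j : Fin m),
      T i x j = if (j : ℕ) = (i : ℕ)
        then x ⟨m - 1, by omega⟩ / ((Real.sqrt k : ℝ) : ℂ) else 0) :
    jointOpNorm 2 T = 1 ∧ jointNumRadius 2 T = 1 / (2 * Real.sqrt k) ∧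
    jointNumIndex 2 k ℂ (EuclideanSpace ℂ (Fin m)) = 1 / (2 * Real.sqrt k) ∧
    jointNumIndex 2 k ℂ (lp (fun _ : ℕ => ℂ) 2) = 1 / (2 * Real.sqrt k) := by
  obtain ⟨g, hg, rfl⟩ := exists_orthonormal_eq_rankOneTuple hkm T hT
  have hb : Orthonormal ℂ fun j : Fin (k + 1) =>
      (default : HilbertBasis ℕ ℂ (lp (fun _ : ℕ => ℂ) 2)) j :=
    (HilbertBasis.orthonormal _).comp _ Fin.val_injective
  exact ⟨jointOpNorm_rankOneTuple hk1 hg, jointNumRadius_rankOneTuple hk1 hg,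
    jointNumIndex_two_eq_of_orthonormal hk1 hg, jointNumIndex_two_eq_of_orthonormal hk1 hb⟩
end
end
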